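/- Let $R$ be a ring, let $C$, $D_1$, $D_2$ be chain complexes of $R$-modules, and let $f : C \to D_1 \oplus D_2$ be a chain map such that the composition $\pi_1 \circ f : C \to D_1$ with the projection onto the first summand is an isomorphism of chain complexes. Then the mapping cone $\operatorname{Cone}(f)$ is chain homotopy equivalent to $D_2$. -/

import Mathlib

/-!
Writing `g := π₁ ∘ f : C ≅ D₁`, the map `Cone(f) → D₂`, `(c, a, b) ↦ b - π₂ f (g⁻¹ a)`, and the
inclusion `D₂ → Cone(f)`, `b ↦ (0, 0, b)`, are chain maps with composite `id` on `D₂`, and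
`(c, a, b) ↦ (-g⁻¹ a, 0, 0)` is a homotopy from the other composite to the identity of `Cone(f)`; the
homotopy identity reduces to `dC ∘ g⁻¹ = g⁻¹ ∘ d₁`, i.e. to `g⁻¹` being a chain map.
-/

namespace ConeCancellation

variable {R : Type*} [Ring R] {C D₁ D₂ : ℤ → Type*}
  [∀ n, AddCommGroup (C n)] [∀ n, Module R (C n)]
  [∀ n, AddCommGroup (D₁ n)] [∀ n, Module R (D₁ n)]
  [∀ n, AddCommGroup (D₂ n)] [∀ n, Module R (D₂ n)]
  (f : ∀ n : ℤ, C n →ₗ[R] D₁ n × D₂ n) (hiso : ∀ n : ℤ, Function.Bijective fun x => (f n x).1)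
  {dC : ∀ n : ℤ, C (n + 1) →ₗ[R] C n} {d₁ : ∀ n : ℤ, D₁ (n + 1) →ₗ[R] D₁ n}
  {d₂ : ∀ n : ℤ, D₂ (n + 1) →ₗ[R] D₂ n}

noncomputable def fstCompEquiv (n : ℤ) : C n ≃ₗ[R] D₁ n :=
  LinearEquiv.ofBijective ((LinearMap.fst R (D₁ n) (D₂ n)).comp (f n)) (hiso n)

@[simp]
theorem fstCompEquiv_apply (n : ℤ) (x : C n) : fstCompEquiv f hiso n x = (f n x).1 := rfl

@[simp]
theorem fst_apply_fstCompEquiv_symm (n : ℤ) (a : D₁ n) :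
    (f n ((fstCompEquiv f hiso n).symm a)).1 = a :=
  (fstCompEquiv f hiso n).apply_symm_apply a

@[simp]
theorem fstCompEquiv_symm_fst_apply (n : ℤ) (x : C n) :
    (fstCompEquiv f hiso n).symm (f n x).1 = x :=
  (fstCompEquiv f hiso n).symm_apply_apply x

theorem dC_fstCompEquiv_symm
    (hf : ∀ (n : ℤ) (x : C (n + 1)),
      f n (dC n x) = (d₁ n (f (n + 1) x).1, d₂ n (f (n + 1) x).2))
    (n : ℤ) (a : D₁ (n + 1)) :
    dC n ((fstCompEquiv f hiso (n + 1)).symm a) = (fstCompEquiv f hiso n).symm (d₁ n a) := by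
  apply (fstCompEquiv f hiso n).injective
  simp [hf]

noncomputable def coneProj (n : ℤ) : (C n × D₁ (n + 1) × D₂ (n + 1)) →ₗ[R] D₂ (n + 1) :=
  LinearMap.snd R _ _ ∘ₗ LinearMap.snd R _ _ -
    LinearMap.snd R _ _ ∘ₗ f (n + 1) ∘ₗ (fstCompEquiv f hiso (n + 1)).symm.toLinearMap ∘ₗ
      LinearMap.fst R _ _ ∘ₗ LinearMap.snd R _ _

variable (R C D₁) in
def coneIncl (n : ℤ) : D₂ (n + 1) →ₗ[R] (C n × D₁ (n + 1) × D₂ (n + 1)) :=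
  LinearMap.inr R _ _ ∘ₗ LinearMap.inr R _ _

noncomputable def coneHomotopy (n : ℤ) :
    (C n × D₁ (n + 1) × D₂ (n + 1)) →ₗ[R] (C (n + 1) × D₁ (n + 1 + 1) × D₂ (n + 1 + 1)) :=
  -(LinearMap.inl R _ _ ∘ₗ (fstCompEquiv f hiso (n + 1)).symm.toLinearMap ∘ₗ
      LinearMap.fst R _ _ ∘ₗ LinearMap.snd R _ _)

@[simp]
theorem coneProj_apply (n : ℤ) (p : C n × D₁ (n + 1) × D₂ (n + 1)) :
    coneProj f hiso n p = p.2.2 - (f (n + 1) ((fstCompEquiv f hiso (n + 1)).symm p.2.1)).2 :=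
  rfl

@[simp]
theorem coneIncl_apply (n : ℤ) (b : D₂ (n + 1)) : coneIncl R C D₁ n b = (0, 0, b) :=
  rfl

@[simp]
theorem coneHomotopy_apply (n : ℤ) (p : C n × D₁ (n + 1) × D₂ (n + 1)) :
    coneHomotopy f hiso n p = (-(fstCompEquiv f hiso (n + 1)).symm p.2.1, 0, 0) := by
  simp [coneHomotopy, ← Prod.mk_zero_zero]

variable (dC d₁ d₂) in
/-- `DK n` is the differential `Cone(f)_{n+2} → Cone(f)_{n+1}`, where
`Cone(f)_{n+1} = C n × D₁ (n+1) × D₂ (n+1)`. -/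
def IsConeDiff
    (DK : ∀ n : ℤ,
      (C (n + 1) × D₁ (n + 1 + 1) × D₂ (n + 1 + 1)) →ₗ[R] (C n × D₁ (n + 1) × D₂ (n + 1))) :
    Prop :=
  ∀ (n : ℤ) (c : C (n + 1)) (a : D₁ (n + 1 + 1)) (b : D₂ (n + 1 + 1)),
    DK n (c, a, b) = (-(dC n c), (f (n + 1) c).1 + d₁ (n + 1) a, (f (n + 1) c).2 + d₂ (n + 1) b)

variable {f hiso}
  {DK : ∀ n : ℤ,
    (C (n + 1) × D₁ (n + 1 + 1) × D₂ (n + 1 + 1)) →ₗ[R] (C n × D₁ (n + 1) × D₂ (n + 1))}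

theorem coneProj_comp_coneDiff
    (hf : ∀ (n : ℤ) (x : C (n + 1)),
      f n (dC n x) = (d₁ n (f (n + 1) x).1, d₂ n (f (n + 1) x).2))
    (hDK : IsConeDiff f dC d₁ d₂ DK) (n : ℤ) :
    coneProj f hiso n ∘ₗ DK n = d₂ (n + 1) ∘ₗ coneProj f hiso (n + 1) := by
  apply LinearMap.ext
  rintro ⟨c, a, b⟩
  simp [hDK _ c a b, ← dC_fstCompEquiv_symm f hiso hf, hf]

theorem coneIncl_comp_d₂ (hDK : IsConeDiff f dC d₁ d₂ DK) (n : ℤ) :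
    coneIncl R C D₁ n ∘ₗ d₂ (n + 1) = DK n ∘ₗ coneIncl R C D₁ (n + 1) := by
  refine LinearMap.ext fun b => ?_
  simp [hDK _ 0 0 b]

theorem coneProj_comp_coneIncl (n : ℤ) :
    coneProj f hiso n ∘ₗ coneIncl R C D₁ n = LinearMap.id := by
  ext b
  simp

theorem coneIncl_comp_coneProj_sub_id
    (hf : ∀ (n : ℤ) (x : C (n + 1)),
      f n (dC n x) = (d₁ n (f (n + 1) x).1, d₂ n (f (n + 1) x).2))
    (hDK : IsConeDiff f dC d₁ d₂ DK) (n : ℤ) :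
    coneIncl R C D₁ (n + 1) ∘ₗ coneProj f hiso (n + 1) - LinearMap.id =
      DK (n + 1) ∘ₗ coneHomotopy f hiso (n + 1) + coneHomotopy f hiso n ∘ₗ DK n := by
  apply LinearMap.ext
  rintro ⟨c, a, b⟩
  simp [hDK n c a b, hDK (n + 1) _ 0 0, dC_fstCompEquiv_symm f hiso hf]

end ConeCancellation

theorem cone_of_split_iso_component_homotopy_equiv
    (R : Type) [Ring R]
    (C D₁ D₂ : ℤ → Type)
    [∀ n, AddCommGroup (C n)] [∀ n, Module R (C n)]
    [∀ n, AddCommGroup (D₁ n)] [∀ n, Module R (D₁ n)]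
    [∀ n, AddCommGroup (D₂ n)] [∀ n, Module R (D₂ n)]
    (dC : ∀ n : ℤ, C (n + 1) →ₗ[R] C n)
    (d₁ : ∀ n : ℤ, D₁ (n + 1) →ₗ[R] D₁ n)
    (d₂ : ∀ n : ℤ, D₂ (n + 1) →ₗ[R] D₂ n)
    -- the chain map f : C → D₁ ⊕ D₂
    (f : ∀ n : ℤ, C n →ₗ[R] D₁ n × D₂ n)
    (hf : ∀ (n : ℤ) (x : C (n + 1)),
      f n (dC n x) = (d₁ n (f (n + 1) x).1, d₂ n (f (n + 1) x).2))
    -- π₁ ∘ f is an isomorphism of chain complexes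
    (hiso : ∀ n : ℤ, Function.Bijective fun x : C n => (f n x).1)
    -- the differential of the mapping cone of f
    (DK : ∀ n : ℤ,
      (C (n + 1) × D₁ (n + 1 + 1) × D₂ (n + 1 + 1)) →ₗ[R]
        (C n × D₁ (n + 1) × D₂ (n + 1)))
    (hDK : ∀ (n : ℤ) (c : C (n + 1)) (a : D₁ (n + 1 + 1)) (b : D₂ (n + 1 + 1)),
      DK n (c, a, b) =
        (-(dC n c), (f (n + 1) c).1 + d₁ (n + 1) a, (f (n + 1) c).2 + d₂ (n + 1) b)) :
    -- conclusion: Cone(f) is chain homotopy equivalent to D₂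
    ∃ (φ : ∀ n : ℤ, (C n × D₁ (n + 1) × D₂ (n + 1)) →ₗ[R] D₂ (n + 1))
      (ψ : ∀ n : ℤ, D₂ (n + 1) →ₗ[R] (C n × D₁ (n + 1) × D₂ (n + 1))),
      -- φ and ψ are chain maps
      (∀ n, (φ n).comp (DK n) = (d₂ (n + 1)).comp (φ (n + 1))) ∧
      (∀ n, (ψ n).comp (d₂ (n + 1)) = (DK n).comp (ψ (n + 1))) ∧
      -- ψ ∘ φ is chain homotopic to the identity of Cone(f)
      (∃ H : ∀ n : ℤ,
          (C n × D₁ (n + 1) × D₂ (n + 1)) →ₗ[R]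
            (C (n + 1) × D₁ (n + 1 + 1) × D₂ (n + 1 + 1)),
        ∀ n, (ψ (n + 1)).comp (φ (n + 1)) - LinearMap.id
          = (DK (n + 1)).comp (H (n + 1)) + (H n).comp (DK n)) ∧
      -- φ ∘ ψ is chain homotopic to the identity of D₂
      (∃ H' : ∀ n : ℤ, D₂ (n + 1) →ₗ[R] D₂ (n + 1 + 1),
        ∀ n, (φ (n + 1)).comp (ψ (n + 1)) - LinearMap.id
          = (d₂ (n + 1 + 1)).comp (H' (n + 1)) + (H' n).comp (d₂ (n + 1))) := by
  refine ⟨ConeCancellation.coneProj f hiso, ConeCancellation.coneIncl R C D₁,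
    ConeCancellation.coneProj_comp_coneDiff hf hDK, ConeCancellation.coneIncl_comp_d₂ hDK,
    ⟨_, ConeCancellation.coneIncl_comp_coneProj_sub_id hf hDK⟩, ⟨0, fun n => ?_⟩⟩
  rw [ConeCancellation.coneProj_comp_coneIncl]
  simp
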